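/- arXiv:1409.1293 — 5 statements merged into one kernel-verified Lean document; each statement's English description precedes it below -/
import Mathlib

section
/- For integers 0 < m < n such that n/m is not a power of a prime, the quotient ring ℤ[t]/(Φ_m(t), Φ_n(t)) is the zero ring, where Φ_k denotes the k-th cyclotomic polynomial. -/
open Polynomial

/-!
Suppose the ideal `(Φ_m, Φ_n)` is proper and pick a maximal ideal `M` above it. In the residue
field `K = ℤ[X]/M` the image of `X` is a common root of `Φ_m` and `Φ_n`. In characteristic `0`
a root of `Φ_k` is a primitive `k`-th root of unity, so `m = n`. In characteristic `p` a root of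
`Φ_{p^a k'}` with `p ∤ k'` is a primitive `k'`-th root of unity, so `m` and `n` have the same
prime-to-`p` part, and then `m < n` forces `n = m p^i` with `i ≥ 1`.
-/

theorem Polynomial.isRoot_cyclotomic_mk_X {R : Type*} [CommRing R] {I : Ideal R[X]} {k : ℕ}
    (hk : cyclotomic k R ∈ I) : (cyclotomic k (R[X] ⧸ I)).IsRoot (Ideal.Quotient.mk I X) := by
  have h : aeval (Ideal.Quotient.mkₐ R I X) (cyclotomic k R) = 0 := by
    rwa [aeval_algHom_apply, aeval_X_left_apply, Ideal.Quotient.mkₐ_eq_mk,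
      Ideal.Quotient.eq_zero_iff_mem]
  rwa [aeval_def, ← eval_map, map_cyclotomic] at h

section CommonRoot

variable {R : Type*} [CommRing R] [IsDomain R] {m n : ℕ} {x : R}

theorem Polynomial.eq_of_isRoot_cyclotomic [CharZero R] (hm : m ≠ 0) (hn : n ≠ 0)
    (hxm : (cyclotomic m R).IsRoot x) (hxn : (cyclotomic n R).IsRoot x) : m = n := by
  have : NeZero (m : R) := ⟨Nat.cast_ne_zero.2 hm⟩
  have : NeZero (n : R) := ⟨Nat.cast_ne_zero.2 hn⟩
  rw [isRoot_cyclotomic_iff] at hxm hxn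
  exact hxm.unique hxn

theorem Polynomial.ordCompl_eq_of_isRoot_cyclotomic {p : ℕ} [Fact p.Prime] [CharP R p]
    (hm : m ≠ 0) (hn : n ≠ 0)
    (hxm : (cyclotomic m R).IsRoot x) (hxn : (cyclotomic n R).IsRoot x) :
    ordCompl[p] m = ordCompl[p] n := by
  have hp : p.Prime := Fact.out
  have : NeZero ((ordCompl[p] m : ℕ) : R) :=
    ⟨fun h => Nat.not_dvd_ordCompl hp hm ((CharP.cast_eq_zero_iff R p _).1 h)⟩
  have : NeZero ((ordCompl[p] n : ℕ) : R) :=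
    ⟨fun h => Nat.not_dvd_ordCompl hp hn ((CharP.cast_eq_zero_iff R p _).1 h)⟩
  rw [← Nat.ordProj_mul_ordCompl_eq_self m p, isRoot_cyclotomic_prime_pow_mul_iff_of_charP]
    at hxm
  rw [← Nat.ordProj_mul_ordCompl_eq_self n p, isRoot_cyclotomic_prime_pow_mul_iff_of_charP]
    at hxn
  exact hxm.unique hxn

end CommonRoot

theorem Nat.exists_eq_mul_pow_of_ordCompl_eq {p m n : ℕ} (hp : p.Prime) (hmn : m < n)
    (h : ordCompl[p] m = ordCompl[p] n) : ∃ i, 1 ≤ i ∧ n = m * p ^ i := by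
  obtain ⟨c, hcm, hcn⟩ : ∃ c, ordProj[p] m * c = m ∧ ordProj[p] n * c = n :=
    ⟨_, Nat.ordProj_mul_ordCompl_eq_self m p, h ▸ Nat.ordProj_mul_ordCompl_eq_self n p⟩
  generalize m.factorization p = a, n.factorization p = b at hcm hcn
  subst hcm hcn
  have hab : a < b :=
    (Nat.pow_lt_pow_iff_right hp.one_lt).1 (Nat.lt_of_mul_lt_mul_right hmn)
  refine ⟨b - a, by omega, ?_⟩
  rw [mul_right_comm, ← pow_add, Nat.add_sub_cancel' hab.le]

/-- Lemma 2.3(1): for `0 < m < n` with `n/m` not a prime power (i.e. there is no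
prime `q` and `i ≥ 1` with `n = m * q^i`), the ring `ℤ[t]/(Φ_m(t), Φ_n(t))` is zero. -/
theorem stmt_0 (m n : ℕ) (h0 : 0 < m) (hmn : m < n)
    (hnp : ¬ ∃ (q i : ℕ), q.Prime ∧ 1 ≤ i ∧ n = m * q ^ i) :
    Subsingleton (ℤ[X] ⧸ Ideal.span ({cyclotomic m ℤ, cyclotomic n ℤ} : Set ℤ[X])) := by
  rw [Ideal.Quotient.subsingleton_iff]
  by_contra hproper
  obtain ⟨M, hM, hle⟩ := Ideal.exists_le_maximal _ hproper
  let : Field (ℤ[X] ⧸ M) := Ideal.Quotient.field M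
  have hxm := isRoot_cyclotomic_mk_X (hle (Ideal.subset_span (by simp : cyclotomic m ℤ ∈ _)))
  have hxn := isRoot_cyclotomic_mk_X (hle (Ideal.subset_span (by simp : cyclotomic n ℤ ∈ _)))
  have hm : m ≠ 0 := h0.ne'
  have hn : n ≠ 0 := (h0.trans hmn).ne'
  rcases CharP.char_is_prime_or_zero (ℤ[X] ⧸ M) (ringChar (ℤ[X] ⧸ M)) with hp | hp
  · have : Fact (ringChar (ℤ[X] ⧸ M)).Prime := ⟨hp⟩
    obtain ⟨i, hi, hnm⟩ := Nat.exists_eq_mul_pow_of_ordCompl_eq hp hmn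
      (ordCompl_eq_of_isRoot_cyclotomic hm hn hxm hxn)
    exact hnp ⟨_, i, hp, hi, hnm⟩
  · have : CharZero (ℤ[X] ⧸ M) := (CharP.ringChar_zero_iff_CharZero _).1 hp
    exact hmn.ne (eq_of_isRoot_cyclotomic hm hn hxm hxn)
end

section
/- Let p be a prime, n ≥ 1, and let g(t) = ∏_{i=1}^r Φ_{a_i}(t) be a product of cyclotomic polynomials (not necessarily distinct) with each a_i ≥ 2 and p ∤ a_i. Then the quotient ring ℤ[t]/(1 - t^{p^n}, g(t)) is a finite ring. -/
/-!
Over `ℚ`, `t^(p^n) - 1 = ∏_{d ∣ p^n} Φ_d` and no `a_i` is a prime power of `p`, so the two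
generators are coprime and their resultant is a nonzero integer `c` lying in the ideal. The
quotient is then a finitely generated abelian group (a quotient of `ℤ[t]/(t^(p^n) - 1)`) killed
by `c`, hence finite.
-/

open Polynomial

lemma Polynomial.C_resultant_mem_span_pair {R : Type*} [CommRing R] (f g : R[X])
    (h : f.natDegree ≠ 0 ∨ g.natDegree ≠ 0) :
    C (resultant f g) ∈ Ideal.span {f, g} := by
  obtain ⟨p, q, -, -, e⟩ := exists_mul_add_mul_eq_C_resultant f g le_rfl le_rfl h
  exact Ideal.mem_span_pair.mpr ⟨p, q, by rw [← e]; ring⟩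

lemma Polynomial.resultant_ne_zero_of_isCoprime_map {R S : Type*} [CommRing R] [CommRing S]
    [IsDomain S] {φ : R →+* S} (hφ : Function.Injective φ) {f g : R[X]}
    (h : IsCoprime (f.map φ) (g.map φ)) : resultant f g ≠ 0 := by
  have := resultant_ne_zero _ _ h
  rwa [natDegree_map_eq_of_injective hφ, natDegree_map_eq_of_injective hφ, resultant_map_map,
    map_ne_zero_iff _ hφ] at this

lemma Polynomial.finite_quotient_of_monic_mem_of_C_mem {I : Ideal ℤ[X]} {f : ℤ[X]}
    (hf : f.Monic) (hfI : f ∈ I) {c : ℤ} (hc : c ≠ 0) (hcI : C c ∈ I) :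
    Finite (ℤ[X] ⧸ I) := by
  have hle : Ideal.span {f} ≤ I := Ideal.span_le.mpr (Set.singleton_subset_iff.mpr hfI)
  have := hf.finite_quotient
  have : Module.Finite ℤ (ℤ[X] ⧸ I) :=
    .of_surjective (Ideal.Quotient.factorₐ ℤ hle).toLinearMap
      (Ideal.Quotient.factor_surjective hle)
  refine Module.finite_of_fg_torsion _ fun x => ⟨⟨c, mem_nonZeroDivisors_of_ne_zero hc⟩, ?_⟩
  obtain ⟨q, rfl⟩ := Ideal.Quotient.mk_surjective x
  change c • Ideal.Quotient.mk I q = 0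
  rw [← map_zsmul, smul_eq_C_mul, Ideal.Quotient.eq_zero_iff_mem]
  exact I.mul_mem_right q hcI

lemma Polynomial.isCoprime_X_pow_sub_one_cyclotomic {N a : ℕ} (hN : 0 < N) (h : ¬ a ∣ N) :
    IsCoprime (X ^ N - 1 : ℚ[X]) (cyclotomic a ℚ) := by
  rw [← prod_cyclotomic_eq_X_pow_sub_one hN]
  refine IsCoprime.prod_left fun d hd => cyclotomic.isCoprime_rat ?_
  rintro rfl
  exact h (Nat.dvd_of_mem_divisors hd)

lemma Nat.Prime.not_dvd_pow_of_not_dvd {p a : ℕ} (hp : p.Prime) (ha : a ≠ 1) (hpa : ¬ p ∣ a)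
    (n : ℕ) : ¬ a ∣ p ^ n := fun h =>
  ha (Nat.Coprime.eq_one_of_dvd ((hp.coprime_iff_not_dvd.mpr hpa).pow_left n).symm h)

theorem stmt_2_general (p n r : ℕ) (hp : p.Prime) (a : Fin r → ℕ)
    (ha2 : ∀ i, 2 ≤ a i) (hpa : ∀ i, ¬ p ∣ a i) :
    Finite (ℤ[X] ⧸ Ideal.span
      ({1 - X ^ (p ^ n), ∏ i, cyclotomic (a i) ℤ} : Set ℤ[X])) := by
  have hN : 0 < p ^ n := pow_pos hp.pos n
  have hcop : IsCoprime ((1 - X ^ (p ^ n) : ℤ[X]).map (Int.castRingHom ℚ))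
      ((∏ i, cyclotomic (a i) ℤ).map (Int.castRingHom ℚ)) := by
    rw [Polynomial.map_sub, Polynomial.map_pow, Polynomial.map_one, map_X, ← neg_sub,
      IsCoprime.neg_left_iff, Polynomial.map_prod]
    refine IsCoprime.prod_right fun i _ => ?_
    rw [map_cyclotomic]
    exact isCoprime_X_pow_sub_one_cyclotomic hN
      (hp.not_dvd_pow_of_not_dvd (by have := ha2 i; omega) (hpa i) n)
  have hdeg : (1 - X ^ (p ^ n) : ℤ[X]).natDegree ≠ 0 := by
    rw [← neg_sub, natDegree_neg, ← C_1, natDegree_X_pow_sub_C]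
    exact hN.ne'
  refine finite_quotient_of_monic_mem_of_C_mem (monic_X_pow_sub_C 1 hN.ne') ?_
    (resultant_ne_zero_of_isCoprime_map Int.cast_injective hcop)
    (C_resultant_mem_span_pair _ _ (.inl hdeg))
  exact Ideal.mem_span_pair.mpr ⟨-1, 0, by rw [C_1]; ring⟩

/-- Lemma 2.4: for a prime `p`, `n ≥ 1`, and `g = ∏_{i=1}^r Φ_{a_i}` with each
`a_i ≥ 2` and `p ∤ a_i`, the ring `ℤ[t]/(1 - t^{p^n}, g(t))` is finite. -/
theorem stmt_2 (p n r : ℕ) (hp : p.Prime) (hn : 1 ≤ n) (a : Fin r → ℕ)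
    (ha2 : ∀ i, 2 ≤ a i) (hpa : ∀ i, ¬ p ∣ a i) :
    Finite (ℤ[X] ⧸ Ideal.span
      ({1 - X ^ (p ^ n), ∏ i, cyclotomic (a i) ℤ} : Set ℤ[X])) :=
  stmt_2_general p n r hp a ha2 hpa
end

section
/- Let A be a Noetherian ring, B = A[x_1, ..., x_n] a polynomial ring over A, and f ∈ B a polynomial whose coefficients generate the unit ideal of A. Then f is a non-zero-divisor in B and B/(f) is flat over A. -/
/-!
A polynomial with a coefficient that is a non-zero-divisor is itself a non-zero-divisor, by
induction on the number of variables. If the coefficients of `f` generate the unit ideal, then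
after localizing at any maximal ideal one of them becomes a unit, so `f` is a non-zero-divisor;
the same holds for the image of `f` in `(A ⧸ I)[x₁, …, xₙ]` for every ideal `I`. Since `B` is
flat, a diagram chase shows that `I ⊗ B/(f) → B/(f)` is injective as soon as multiplication by
`f` is injective on `B/IB`, so `B/(f)` is flat.
-/

open TensorProduct LinearMap nonZeroDivisors

namespace Module.Flat

variable {R M N : Type*} [CommRing R] [AddCommGroup M] [Module R M] [AddCommGroup N] [Module R N]

theorem range_lift_lsmul_comp_subtype (I : Ideal R) :
    range (lift ((lsmul R M).comp I.subtype)) = I • ⊤ := by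
  refine le_antisymm ?_ (Submodule.smul_le.mpr fun r hr m _ ↦ ⟨⟨r, hr⟩ ⊗ₜ m, by simp⟩)
  rintro _ ⟨z, rfl⟩
  induction z using TensorProduct.induction_on with
  | zero => simp
  | tmul r m => simpa using Submodule.smul_mem_smul r.2 Submodule.mem_top
  | add z z' hz hz' => rw [map_add]; exact add_mem hz hz'

theorem lift_lsmul_comp_subtype_comp_lTensor (I : Ideal R) (φ : N →ₗ[R] M) :
    lift ((lsmul R M).comp I.subtype) ∘ₗ φ.lTensor I = φ ∘ₗ lift ((lsmul R N).comp I.subtype) :=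
  TensorProduct.ext' fun r n ↦ by simp

/-- The hypothesis says that `φ ⊗ (R ⧸ I) : N ⧸ I N → M ⧸ I M` is injective for every `I`. -/
theorem quotient_range_of_comap_smul_top_le [Flat R M] (φ : N →ₗ[R] M)
    (hφ : ∀ I : Ideal R, (I • ⊤ : Submodule R M).comap φ ≤ I • ⊤) :
    Flat R (M ⧸ range φ) := by
  rw [iff_lift_lsmul_comp_subtype_injective]
  intro I hI
  have hM := iff_lift_lsmul_comp_subtype_injective.mp ‹Flat R M› hI
  rw [injective_iff_map_eq_zero]
  intro x hx
  obtain ⟨y, rfl⟩ := lTensor_surjective I (range φ).mkQ_surjective x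
  rw [← comp_apply, lift_lsmul_comp_subtype_comp_lTensor, comp_apply, Submodule.mkQ_apply,
    Submodule.Quotient.mk_eq_zero] at hx
  obtain ⟨c, hc⟩ := hx
  have hcI : c ∈ I • (⊤ : Submodule R N) := by
    refine hφ I ?_
    rw [Submodule.mem_comap, hc, ← range_lift_lsmul_comp_subtype]
    exact mem_range_self _ y
  rw [← range_lift_lsmul_comp_subtype] at hcI
  obtain ⟨z, rfl⟩ := hcI
  have hy : y = φ.lTensor I z := hM <| by
    rw [← hc]
    exact (DFunLike.congr_fun (lift_lsmul_comp_subtype_comp_lTensor I φ) z).symm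
  rw [hy, ← lTensor_comp_apply, range_mkQ_comp, lTensor_zero, LinearMap.zero_apply]

theorem quotient_span_singleton {A B : Type*} [CommRing A] [CommRing B] [Algebra A B]
    [Flat A B] (f : B)
    (hf : ∀ (I : Ideal A) (x : B), f * x ∈ I.map (algebraMap A B) → x ∈ I.map (algebraMap A B)) :
    Flat A (B ⧸ Ideal.span {f}) := by
  have hrange : (Ideal.span {f}).restrictScalars A = range (mulLeft A f) := by
    ext x
    simp [Ideal.mem_span_singleton', mul_comm]
  have hflat := quotient_range_of_comap_smul_top_le (mulLeft A f) fun I x hx ↦ by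
    simpa using hf I x (by simpa using hx)
  rw [← hrange] at hflat
  exact of_linearEquiv (Submodule.Quotient.restrictScalarsEquiv A (Ideal.span {f})).symm

end Module.Flat

theorem IsLocalRing.exists_isUnit_of_span_eq_top {R : Type*} [CommSemiring R] [IsLocalRing R]
    {s : Set R} (hs : Ideal.span s = ⊤) : ∃ a ∈ s, IsUnit a := by
  by_contra! h
  have hle : Ideal.span s ≤ maximalIdeal R :=
    Ideal.span_le.mpr fun a ha ↦ (mem_maximalIdeal a).mpr (h a ha)
  exact (maximalIdeal.isMaximal R).ne_top (top_le_iff.mp (hs ▸ hle))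

namespace MvPolynomial

theorem mem_nonZeroDivisors_of_coeff_mem {R : Type*} [CommSemiring R] :
    ∀ {n : ℕ} {f : MvPolynomial (Fin n) R} (m : Fin n →₀ ℕ), coeff m f ∈ R⁰ →
      f ∈ (MvPolynomial (Fin n) R)⁰
  | 0, f, m, hm => by
    rw [Subsingleton.elim m 0, ← isEmptyRingEquiv_eq_coeff_zero] at hm
    exact mem_nonZeroDivisors_of_injective (isEmptyRingEquiv R (Fin 0)).injective hm
  | n + 1, f, m, hm => by
    rw [← Finsupp.cons_tail m, ← finSuccEquiv_coeff_coeff] at hm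
    exact mem_nonZeroDivisors_of_injective (finSuccEquiv R n).injective
      (Polynomial.mem_nonzeroDivisors_of_coeff_mem _ (mem_nonZeroDivisors_of_coeff_mem _ hm))

theorem span_coeff_map_eq_top {R S σ : Type*} [CommSemiring R] [CommSemiring S]
    {f : MvPolynomial σ R} (φ : R →+* S) (hf : Ideal.span (Set.range fun m ↦ coeff m f) = ⊤) :
    Ideal.span (Set.range fun m ↦ coeff m (map φ f)) = ⊤ := by
  simp only [coeff_map, Set.range_comp' φ, ← Ideal.map_span, hf, Ideal.map_top]

theorem mem_nonZeroDivisors_of_span_coeff_eq_top {R : Type*} [CommRing R] {n : ℕ}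
    {f : MvPolynomial (Fin n) R} (hf : Ideal.span (Set.range fun m ↦ coeff m f) = ⊤) :
    f ∈ (MvPolynomial (Fin n) R)⁰ := by
  rw [mem_nonZeroDivisors_iff_right]
  intro g hg
  ext m
  refine eq_zero_of_localization _ fun J _ ↦ ?_
  set φ := algebraMap R (Localization.AtPrime J)
  obtain ⟨_, ⟨m', rfl⟩, hunit⟩ :=
    IsLocalRing.exists_isUnit_of_span_eq_top (span_coeff_map_eq_top φ hf)
  have hφg : map φ g = 0 :=
    mem_nonZeroDivisors_iff_right.mp
      (mem_nonZeroDivisors_of_coeff_mem m' hunit.mem_nonZeroDivisors) _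
      (by rw [← map_mul, hg, map_zero])
  rw [← coeff_map, hφg, coeff_zero]

end MvPolynomial

open MvPolynomial

theorem stmt_13_general (A : Type*) [CommRing A] (n : ℕ)
    (f : MvPolynomial (Fin n) A)
    (hf : Ideal.span {a : A | ∃ m, coeff m f = a} = ⊤) :
    f ∈ nonZeroDivisors (MvPolynomial (Fin n) A) ∧
      Module.Flat A (MvPolynomial (Fin n) A ⧸ Ideal.span ({f} : Set (MvPolynomial (Fin n) A))) := by
  refine ⟨mem_nonZeroDivisors_of_span_coeff_eq_top hf, .quotient_span_singleton f fun I x hx ↦ ?_⟩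
  rw [algebraMap_eq, ← Ideal.mk_ker (I := I), ← ker_map, RingHom.mem_ker] at hx ⊢
  rw [map_mul] at hx
  exact mem_nonZeroDivisors_iff_left.mp
    (mem_nonZeroDivisors_of_span_coeff_eq_top (span_coeff_map_eq_top _ hf)) _ hx

/-- Lemma 3.1: let `A` be Noetherian, `B = A[x₁, …, xₙ]`, and `f ∈ B` a polynomial
whose coefficients generate the unit ideal of `A`. Then `f` is a non-zero-divisor
in `B` and `B/(f)` is flat over `A`. -/
theorem stmt_13 (A : Type*) [CommRing A] [IsNoetherianRing A] (n : ℕ)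
    (f : MvPolynomial (Fin n) A)
    (hf : Ideal.span {a : A | ∃ m, coeff m f = a} = ⊤) :
    f ∈ nonZeroDivisors (MvPolynomial (Fin n) A) ∧
      Module.Flat A (MvPolynomial (Fin n) A ⧸ Ideal.span ({f} : Set (MvPolynomial (Fin n) A))) :=
  stmt_13_general A n f hf
end

section
/- For coprime integers a, b ≥ 2, the ring A = ℂ[u, v]/(u^a + v^b) is an integral domain. -/
/-!
Since `a` and `b` are coprime, one of them, say `a`, is odd. Viewed as a monic polynomial in `u`
over `ℂ[v]`, `u ^ a + v ^ b` is irreducible as soon as it is irreducible over `ℂ(v)` (Gauss), and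
for odd `a` the binomial `u ^ a - c` is irreducible over a field unless `c` is a `d`-th power for
some divisor `1 < d ∣ a`. A `d`-th power in `ℂ(v)` has degree divisible by `d`, whereas `-v ^ b`
has degree `b`, which is prime to `a`. In the UFD `ℂ[u, v]` irreducible means prime.
-/

open Polynomial

theorem pow_ne_neg_algebraMap_X_pow {R K : Type*} [CommRing R] [IsDomain R] [Field K]
    [Algebra R[X] K] [IsFractionRing R[X] K] {d n : ℕ} (hdn : ¬ d ∣ n) (f : K) :
    f ^ d ≠ -algebraMap R[X] K (X ^ n) := by
  intro hf
  obtain ⟨r, s, hs, rfl⟩ := IsFractionRing.div_surjective (A := R[X]) f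
  have hs0 : s ≠ 0 := nonZeroDivisors.ne_zero hs
  have key : r ^ d = -(X ^ n * s ^ d) := by
    apply IsFractionRing.injective R[X] K
    have hs' : algebraMap R[X] K s ^ d ≠ 0 :=
      pow_ne_zero d (IsFractionRing.to_map_ne_zero_of_mem_nonZeroDivisors hs)
    rw [div_pow, div_eq_iff hs'] at hf
    simp only [map_pow, map_neg, map_mul, hf]
    ring
  have hdeg := congrArg natDegree key
  simp only [natDegree_neg, natDegree_mul (pow_ne_zero n X_ne_zero) (pow_ne_zero d hs0),
    natDegree_pow, natDegree_X, mul_one] at hdeg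
  exact hdn ((Nat.dvd_add_left (dvd_mul_right d _)).mp (hdeg ▸ dvd_mul_right d _))

theorem irreducible_X_pow_add_C_X_pow {k : Type*} [Field k] {m n : ℕ} (hm : Odd m)
    (hmn : m.Coprime n) : Irreducible (X ^ m + C (X ^ n) : k[X][X]) := by
  rw [(monic_X_pow_add_C _ hm.pos.ne').irreducible_iff_irreducible_map_fraction_map
    (K := FractionRing k[X])]
  have hmap : (X ^ m + C (X ^ n) : k[X][X]).map (algebraMap k[X] (FractionRing k[X])) =
      X ^ m - C (-algebraMap k[X] (FractionRing k[X]) (X ^ n)) := by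
    simp
  rw [hmap, X_pow_sub_C_irreducible_iff_of_odd hm]
  exact fun d hdm hd1 ↦ pow_ne_neg_algebraMap_X_pow fun hdn ↦
    hd1 (Nat.eq_one_of_dvd_coprimes hmn hdm hdn)

namespace MvPolynomial

noncomputable def finTwoAlgEquiv (R : Type*) [CommSemiring R] :
    MvPolynomial (Fin 2) R ≃ₐ[R] R[X][X] :=
  (finSuccEquiv R 1).trans (Polynomial.mapAlgEquiv (uniqueAlgEquiv R (Fin 1)))

@[simp]
theorem finTwoAlgEquiv_X_zero (R : Type*) [CommSemiring R] :
    finTwoAlgEquiv R (X 0) = Polynomial.X := by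
  simp [finTwoAlgEquiv, finSuccEquiv_X_zero]

@[simp]
theorem finTwoAlgEquiv_X_one (R : Type*) [CommSemiring R] :
    finTwoAlgEquiv R (X 1) = Polynomial.C Polynomial.X := by
  rw [finTwoAlgEquiv, AlgEquiv.trans_apply, ← Fin.succ_zero_eq_one, finSuccEquiv_X_succ]
  simp

variable {k : Type*} [Field k] {m n : ℕ}

theorem prime_X_zero_pow_add_X_one_pow_of_odd (hm : Odd m) (hmn : m.Coprime n) :
    Prime (X 0 ^ m + X 1 ^ n : MvPolynomial (Fin 2) k) := by
  rw [← MulEquiv.prime_iff (finTwoAlgEquiv k).toMulEquiv]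
  simpa using (irreducible_X_pow_add_C_X_pow hm hmn).prime

theorem prime_X_zero_pow_add_X_one_pow (hmn : m.Coprime n) :
    Prime (X 0 ^ m + X 1 ^ n : MvPolynomial (Fin 2) k) := by
  rcases Nat.even_or_odd m with hm | hm
  · have hn : Odd n := (Nat.Coprime.coprime_dvd_left hm.two_dvd hmn).odd_of_left
    rw [← MulEquiv.prime_iff (renameEquiv k (Equiv.swap 0 1)).toMulEquiv]
    simpa [add_comm] using prime_X_zero_pow_add_X_one_pow_of_odd hn hmn.symm
  · exact prime_X_zero_pow_add_X_one_pow_of_odd hm hmn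

end MvPolynomial

theorem stmt_15_general (a b : ℕ) (hcop : Nat.Coprime a b) :
    IsDomain (MvPolynomial (Fin 2) ℂ ⧸
      Ideal.span ({MvPolynomial.X 0 ^ a + MvPolynomial.X 1 ^ b} :
        Set (MvPolynomial (Fin 2) ℂ))) := by
  have hp := MvPolynomial.prime_X_zero_pow_add_X_one_pow (k := ℂ) hcop
  exact (Ideal.Quotient.isDomain_iff_prime _).mpr
    ((Ideal.span_singleton_prime hp.ne_zero).mpr hp)

/-- For coprime `a, b ≥ 2`, the ring `ℂ[u,v]/(u^a + v^b)` is an integral domain. -/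
theorem stmt_15 (a b : ℕ) (ha : 2 ≤ a) (hb : 2 ≤ b) (hcop : Nat.Coprime a b) :
    IsDomain (MvPolynomial (Fin 2) ℂ ⧸
      Ideal.span ({MvPolynomial.X 0 ^ a + MvPolynomial.X 1 ^ b} :
        Set (MvPolynomial (Fin 2) ℂ))) :=
  stmt_15_general a b hcop
end

section
/- Let a, b ≥ 2 be coprime integers with b odd, and let A = ℂ[u, v]/(u^a + v^b). Then the localization A[u^{-1}] of A at u is isomorphic as a ℂ-algebra to ℂ[t, t^{-1}], via the map sending u to t^b and v to -t^a. -/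
/-!
On `u ≠ 0` the relation reads `(-v)^b = u^a`, so `-v` becomes a unit of `A[u⁻¹]`, and for
coprime `a, b` the Bézout combination `t = u^x (-v)^y` (with `bx + ay = 1`) satisfies
`t^b = u` and `t^a = -v`. Hence `T ↦ t` inverts `u ↦ T^b, v ↦ -T^a`; the latter respects
the relation because `b` is odd. Both composites are the identity since they fix the
generators `T` and `u, v` respectively, and `T` is pinned down by `T^a` and `T^b`.
-/

set_option synthInstance.maxHeartbeats 1000000
set_option maxHeartbeats 1000000

open LaurentPolynomial

noncomputable section

/-- The coordinate ring `A = ℂ[u,v]/(u^a + v^b)`. -/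
abbrev stmt16Ring (a b : ℕ) : Type :=
  MvPolynomial (Fin 2) ℂ ⧸
    Ideal.span ({MvPolynomial.X 0 ^ a + MvPolynomial.X 1 ^ b} :
      Set (MvPolynomial (Fin 2) ℂ))

/-- The class of `u` in `A`. -/
abbrev stmt16u (a b : ℕ) : stmt16Ring a b := Ideal.Quotient.mk _ (MvPolynomial.X 0)

/-- The class of `v` in `A`. -/
abbrev stmt16v (a b : ℕ) : stmt16Ring a b := Ideal.Quotient.mk _ (MvPolynomial.X 1)

section CoprimePowers

variable {G : Type*} [CommGroup G] {a b : ℕ}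

theorem exists_pow_eq_and_pow_eq_of_coprime (hab : a.Coprime b) {u v : G}
    (h : v ^ b = u ^ a) : ∃ t : G, t ^ b = u ∧ t ^ a = v := by
  have hbezout : (b : ℤ) * Int.gcdB a b + a * Int.gcdA a b = 1 := by
    have := Int.gcd_eq_gcd_ab a b
    rw [Int.gcd_natCast_natCast, hab, Nat.cast_one] at this
    linarith
  have hz : ∀ n : ℤ, v ^ (b * n) = u ^ (a * n) := fun n => by
    rw [zpow_mul, zpow_mul, zpow_natCast, zpow_natCast, h]
  refine ⟨u ^ Int.gcdB a b * v ^ Int.gcdA a b, ?_, ?_⟩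
  · calc _ = u ^ ((b : ℤ) * Int.gcdB a b) * v ^ (b * Int.gcdA a b) := by
          rw [← zpow_natCast, mul_zpow, ← zpow_mul, ← zpow_mul, mul_comm _ (b : ℤ),
            mul_comm _ (b : ℤ)]
      _ = u := by rw [hz, ← zpow_add, hbezout, zpow_one]
  · calc _ = v ^ ((b : ℤ) * Int.gcdB a b) * v ^ (a * Int.gcdA a b) := by
          rw [hz, ← zpow_natCast, mul_zpow, ← zpow_mul, ← zpow_mul, mul_comm _ (a : ℤ),
            mul_comm _ (a : ℤ)]
      _ = v := by rw [← zpow_add, hbezout, zpow_one]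

theorem eq_of_pow_eq_of_pow_eq_of_coprime (hab : a.Coprime b) {s r : G}
    (ha : s ^ a = r ^ a) (hb : s ^ b = r ^ b) : s = r := by
  rw [← div_eq_one, ← pow_eq_one_iff_of_coprime hab, div_pow, div_pow, ha, hb, div_self',
    div_self']
  exact ⟨rfl, rfl⟩

end CoprimePowers

namespace LaurentPolynomial

variable {R A : Type*} [CommSemiring R]

def aevalUnit [CommSemiring A] [Algebra R A] (x : Aˣ) : R[T;T⁻¹] →ₐ[R] A where
  __ := eval₂ (algebraMap R A) x
  commutes' := eval₂_C _ _

@[simp]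
theorem aevalUnit_T [CommSemiring A] [Algebra R A] (x : Aˣ) (n : ℤ) :
    aevalUnit (R := R) x (T n) = ↑(x ^ n) :=
  eval₂_T _ _ n

theorem algHom_ext_T_one [Semiring A] [Algebra R A] {f g : R[T;T⁻¹] →ₐ[R] A}
    (h : f (T 1) = g (T 1)) : f = g :=
  (AddMonoidAlgebra.lift R A ℤ).symm.injective (MonoidHom.ext_mint h)

end LaurentPolynomial

namespace BrieskornCurve

open MvPolynomial

variable (R : Type*) [CommRing R] (a b : ℕ)

abbrev coordRing : Type _ :=
  MvPolynomial (Fin 2) R ⧸ Ideal.span ({X 0 ^ a + X 1 ^ b} : Set (MvPolynomial (Fin 2) R))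

abbrev u : coordRing R a b := Ideal.Quotient.mk _ (X 0)

abbrev v : coordRing R a b := Ideal.Quotient.mk _ (X 1)

theorem u_pow_add_v_pow : u R a b ^ a + v R a b ^ b = 0 := by
  rw [← map_pow, ← map_pow, ← map_add, Ideal.Quotient.eq_zero_iff_mem]
  exact Ideal.subset_span rfl

variable {R a b}

def toLaurent (hb : Odd b) : coordRing R a b →ₐ[R] R[T;T⁻¹] :=
  Ideal.Quotient.liftₐ _ (aeval ![T b, -T a]) fun p hp => by
    obtain ⟨q, rfl⟩ := Ideal.mem_span_singleton'.mp hp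
    simp [hb.neg_pow, T_pow, mul_comm (a : ℤ)]

theorem toLaurent_mk (hb : Odd b) (p : MvPolynomial (Fin 2) R) :
    toLaurent hb (Ideal.Quotient.mk _ p : coordRing R a b) = aeval ![T b, -T a] p :=
  rfl

@[simp]
theorem toLaurent_u (hb : Odd b) : toLaurent hb (u R a b) = T b := by
  simp [toLaurent_mk]

@[simp]
theorem toLaurent_v (hb : Odd b) : toLaurent hb (v R a b) = -T a := by
  simp [toLaurent_mk]

local notation "Loc" => Localization.Away (u R a b)

theorem isUnit_toLaurent_u (hb : Odd b) : IsUnit (toLaurent hb (u R a b)) := by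
  simpa using isUnit_T (b : ℤ)

def localizationToLaurent (hb : Odd b) : Loc →ₐ[R] R[T;T⁻¹] :=
  IsLocalization.Away.liftAlgHom (S := Loc) (u R a b) (isUnit_toLaurent_u hb)

@[simp]
theorem localizationToLaurent_algebraMap (hb : Odd b) (x : coordRing R a b) :
    localizationToLaurent hb (algebraMap _ Loc x) = toLaurent hb x :=
  IsLocalization.Away.lift_eq (S := Loc) (u R a b) (isUnit_toLaurent_u hb) x

theorem exists_unit_pow_eq (hab : a.Coprime b) (hb : Odd b) :
    ∃ t : Locˣ, (t : Loc) ^ b = algebraMap _ _ (u R a b) ∧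
      (t : Loc) ^ a = -algebraMap _ _ (v R a b) := by
  have hu : IsUnit (algebraMap _ Loc (u R a b)) := IsLocalization.Away.algebraMap_isUnit _
  have hv : (-algebraMap _ Loc (v R a b)) ^ b = algebraMap _ Loc (u R a b) ^ a := by
    have h := congrArg (algebraMap _ Loc) (u_pow_add_v_pow R a b)
    rw [map_add, map_pow, map_pow, map_zero] at h
    rw [hb.neg_pow]
    linear_combination -h
  have hv' : IsUnit (-algebraMap _ Loc (v R a b)) :=
    (isUnit_pow_iff hb.pos.ne').mp (hv ▸ hu.pow a)
  obtain ⟨t, htb, hta⟩ := exists_pow_eq_and_pow_eq_of_coprime hab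
    (u := hu.unit) (v := hv'.unit) (Units.ext (by simpa using hv))
  exact ⟨t, by simp [← Units.val_pow_eq_pow_val, htb], by simp [← Units.val_pow_eq_pow_val, hta]⟩

variable (R) in
def parameter (hab : a.Coprime b) (hb : Odd b) : Locˣ :=
  (exists_unit_pow_eq hab hb).choose

theorem parameter_pow_b (hab : a.Coprime b) (hb : Odd b) :
    (parameter R hab hb : Loc) ^ b = algebraMap _ _ (u R a b) :=
  (exists_unit_pow_eq hab hb).choose_spec.1

theorem parameter_pow_a (hab : a.Coprime b) (hb : Odd b) :
    (parameter R hab hb : Loc) ^ a = -algebraMap _ _ (v R a b) :=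
  (exists_unit_pow_eq hab hb).choose_spec.2

theorem localizationToLaurent_parameter (hab : a.Coprime b) (hb : Odd b) :
    localizationToLaurent hb (parameter R hab hb : Loc) = T 1 := by
  let τ : R[T;T⁻¹]ˣ := (isUnit_T 1).unit
  have hτ (n : ℕ) : (↑(τ ^ n) : R[T;T⁻¹]) = T n := by simp [τ, T_pow]
  suffices Units.map (localizationToLaurent (R := R) (a := a) hb : Loc →* R[T;T⁻¹])
      (parameter R hab hb) = τ by simpa [τ] using congrArg Units.val this
  refine eq_of_pow_eq_of_pow_eq_of_coprime hab (Units.ext ?_) (Units.ext ?_)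
  · simp [← map_pow, hτ, parameter_pow_a]
  · simp [← map_pow, hτ, parameter_pow_b]

variable (R) in
def laurentToLocalization (hab : a.Coprime b) (hb : Odd b) :
    R[T;T⁻¹] →ₐ[R] Loc :=
  aevalUnit (parameter R hab hb)

theorem localizationToLaurent_comp_laurentToLocalization (hab : a.Coprime b) (hb : Odd b) :
    (localizationToLaurent hb).comp (laurentToLocalization R hab hb) = AlgHom.id R R[T;T⁻¹] :=
  algHom_ext_T_one <| by simp [laurentToLocalization, localizationToLaurent_parameter]

theorem laurentToLocalization_comp_localizationToLaurent (hab : a.Coprime b) (hb : Odd b) :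
    (laurentToLocalization R hab hb).comp (localizationToLaurent hb) = AlgHom.id R Loc := by
  refine IsLocalization.algHom_ext (Submonoid.powers (u R a b)) <|
    Ideal.Quotient.algHom_ext _ <| MvPolynomial.algHom_ext fun i => ?_
  fin_cases i
  · change laurentToLocalization R hab hb (localizationToLaurent hb (algebraMap _ _ (u R a b))) =
      algebraMap _ _ (u R a b)
    simp [laurentToLocalization, parameter_pow_b]
  · change laurentToLocalization R hab hb (localizationToLaurent hb (algebraMap _ _ (v R a b))) =
      algebraMap _ _ (v R a b)
    simp [laurentToLocalization, parameter_pow_a]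

variable (R) in
def localizationEquivLaurent (hab : a.Coprime b) (hb : Odd b) : Loc ≃ₐ[R] R[T;T⁻¹] :=
  AlgEquiv.ofAlgHom (localizationToLaurent hb) (laurentToLocalization R hab hb)
    (localizationToLaurent_comp_laurentToLocalization hab hb)
    (laurentToLocalization_comp_localizationToLaurent hab hb)

@[simp]
theorem localizationEquivLaurent_apply (hab : a.Coprime b) (hb : Odd b) (x : Loc) :
    localizationEquivLaurent R hab hb x = localizationToLaurent hb x :=
  rfl

end BrieskornCurve

theorem stmt_16_general (a b : ℕ) (hcop : Nat.Coprime a b)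
    (hodd : Odd b) :
    ∃ e : Localization.Away (stmt16u a b) ≃+* LaurentPolynomial ℂ,
      e (algebraMap _ _ (stmt16u a b)) = T (b : ℤ) ∧
      e (algebraMap _ _ (stmt16v a b)) = - T (a : ℤ) ∧
      ∀ c : ℂ, e (algebraMap (stmt16Ring a b) (Localization.Away (stmt16u a b))
          (Ideal.Quotient.mk _ (MvPolynomial.C c))) = LaurentPolynomial.C c := by
  refine ⟨(BrieskornCurve.localizationEquivLaurent ℂ hcop hodd).toRingEquiv, ?_, ?_, fun c => ?_⟩
  · exact (BrieskornCurve.localizationToLaurent_algebraMap hodd _).trans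
      (BrieskornCurve.toLaurent_u hodd)
  · exact (BrieskornCurve.localizationToLaurent_algebraMap hodd _).trans
      (BrieskornCurve.toLaurent_v hodd)
  · simp [BrieskornCurve.toLaurent_mk, ← C_eq_algebraMap]

/-- Let `a, b ≥ 2` be coprime with `b` odd, and `A = ℂ[u,v]/(u^a + v^b)`. Then the
localization `A[u⁻¹]` of `A` at `u` is isomorphic as a `ℂ`-algebra to the Laurent
polynomial ring `ℂ[t, t⁻¹]`, via `u ↦ t^b` and `v ↦ -t^a`. -/
theorem stmt_16 (a b : ℕ) (ha : 2 ≤ a) (hb : 2 ≤ b) (hcop : Nat.Coprime a b)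
    (hodd : Odd b) :
    ∃ e : Localization.Away (stmt16u a b) ≃+* LaurentPolynomial ℂ,
      e (algebraMap _ _ (stmt16u a b)) = T (b : ℤ) ∧
      e (algebraMap _ _ (stmt16v a b)) = - T (a : ℤ) ∧
      ∀ c : ℂ, e (algebraMap (stmt16Ring a b) (Localization.Away (stmt16u a b))
          (Ideal.Quotient.mk _ (MvPolynomial.C c))) = LaurentPolynomial.C c :=
  stmt_16_general a b hcop hodd
end
end
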